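/- Let T be a left-invertible bounded operator on a Hilbert space H with Cauchy dual T'. Then the following are equivalent: (i) ‖T'T*x‖ ≤ ‖T'Tx‖ for all x ∈ H; (ii) T(T*T)^{-1}T* ≤ T*(T*T)^{-1}T; (iii) P ≤ T*(T*T)^{-1}T where P is the orthogonal projection onto the closure of the range of T. -/

import Mathlib

/-!
Left invertibility of `T` makes `T*T` bounded below, hence invertible, and then
`Q = T (T*T)⁻¹ T*` is a self-adjoint idempotent with `Q T = T`. So the range of `T` equals the
(closed) range of `Q`, and `P = Q` because orthogonal projections are determined by their ranges;
this gives (ii) ⇔ (iii). For (i) ⇔ (ii), `‖T' y‖² = re ⟪(T*T)⁻¹ y, y⟫`, so the quadratic form of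
`T* (T*T)⁻¹ T - T (T*T)⁻¹ T*` at `x` is `‖T' T x‖² - ‖T' T* x‖²`.
-/

open ContinuousLinearMap

/-- The Cauchy dual `T' = T (T*T)⁻¹` of a left-invertible operator. -/
noncomputable def cauchyDual {H : Type*} [NormedAddCommGroup H] [InnerProductSpace ℂ H]
    [CompleteSpace H] (T : H →L[ℂ] H) : H →L[ℂ] H :=
  T * Ring.inverse (adjoint T * T)

section StarRing

variable {R : Type*} [Semiring R] [StarRing R] {a : R}

theorem mul_ringInverse_star_mul_self_mul_star_mul (ha : IsUnit (star a * a)) :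
    a * Ring.inverse (star a * a) * star a * a = a := by
  rw [mul_assoc (a * _), mul_assoc, Ring.inverse_mul_cancel _ ha, mul_one]

theorem isStarProjection_mul_ringInverse_star_mul_self_mul_star (ha : IsUnit (star a * a)) :
    IsStarProjection (a * Ring.inverse (star a * a) * star a) where
  isIdempotentElem := by
    rw [IsIdempotentElem, ← mul_assoc, ← mul_assoc,
      mul_ringInverse_star_mul_self_mul_star_mul ha]
  isSelfAdjoint := (IsSelfAdjoint.star_mul_self a).ringInverse.conjugate a

end StarRing

namespace ContinuousLinearMap

variable {𝕜 E : Type*} [RCLike 𝕜] [NormedAddCommGroup E] [InnerProductSpace 𝕜 E]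

theorem reApplyInnerSelf_sub (S S' : E →L[𝕜] E) (x : E) :
    (S - S').reApplyInnerSelf x = S.reApplyInnerSelf x - S'.reApplyInnerSelf x := by
  simp only [reApplyInnerSelf_apply, sub_apply, inner_sub_left, map_sub]

variable [CompleteSpace E] {T : E →L[𝕜] E}

theorem isUnit_adjoint_mul_self_of_mul_eq_one {L : E →L[𝕜] E} (hL : L * T = 1) :
    IsUnit (adjoint T * T) := by
  refine isUnit_of_forall_le_norm_inner_map _ (c := (‖L‖₊ ^ 2 + 1)⁻¹) (by positivity)
    fun x ↦ ?_
  have hx : ‖x‖ ≤ ‖L‖ * ‖T x‖ := by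
    simpa [← mul_apply_eq_comp, hL] using L.le_opNorm (T x)
  rw [mul_apply_eq_comp, adjoint_inner_left, inner_self_eq_norm_sq_to_K, ← RCLike.ofReal_pow,
    RCLike.norm_ofReal, abs_sq, NNReal.coe_inv]
  push_cast
  rw [← div_eq_mul_inv, div_le_iff₀ (by positivity)]
  calc ‖x‖ ^ 2 ≤ (‖L‖ * ‖T x‖) ^ 2 := by gcongr
    _ ≤ ‖T x‖ ^ 2 * (‖L‖ ^ 2 + 1) := by nlinarith [sq_nonneg (‖T x‖)]

theorem range_mul_ringInverse_adjoint_mul_self_mul_adjoint (hT : IsUnit (adjoint T * T)) :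
    ((T * Ring.inverse (adjoint T * T) * adjoint T : E →L[𝕜] E) : E →ₗ[𝕜] E).range =
      (T : E →ₗ[𝕜] E).range := by
  refine le_antisymm ?_ ?_
  · rintro _ ⟨x, rfl⟩
    exact ⟨Ring.inverse (adjoint T * T) (adjoint T x), rfl⟩
  · rintro _ ⟨x, rfl⟩
    exact ⟨T x, congr($(mul_ringInverse_star_mul_self_mul_star_mul (a := T) hT) x)⟩

theorem eq_mul_ringInverse_adjoint_mul_self_mul_adjoint {P : E →L[𝕜] E}
    (hT : IsUnit (adjoint T * T)) (hP : IsStarProjection P)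
    (hPT : LinearMap.range (P : E →ₗ[𝕜] E) =
      (LinearMap.range (T : E →ₗ[𝕜] E)).topologicalClosure) :
    P = T * Ring.inverse (adjoint T * T) * adjoint T := by
  have hQ := isStarProjection_mul_ringInverse_star_mul_self_mul_star (a := T) hT
  have hQT := range_mul_ringInverse_adjoint_mul_self_mul_adjoint hT
  have hTclosed : IsClosed ((T : E →ₗ[𝕜] E).range : Set E) :=
    hQT ▸ hQ.isIdempotentElem.isClosed_range
  refine hP.ext hQ ?_
  rw [hPT, hTclosed.submodule_topologicalClosure_eq]
  exact hQT.symm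

theorem reApplyInnerSelf_adjoint_mul_mul (S B : E →L[𝕜] E) (x : E) :
    (adjoint S * B * S).reApplyInnerSelf x = B.reApplyInnerSelf (S x) := by
  simp only [reApplyInnerSelf_apply, mul_apply_eq_comp, adjoint_inner_left]

theorem reApplyInnerSelf_ringInverse_adjoint_mul_self (hT : IsUnit (adjoint T * T)) (y : E) :
    (Ring.inverse (adjoint T * T)).reApplyInnerSelf y =
      ‖T (Ring.inverse (adjoint T * T) y)‖ ^ 2 := by
  rw [← inner_self_eq_norm_sq (𝕜 := 𝕜), ← adjoint_inner_left, ← mul_apply_eq_comp,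
    ← mul_apply_eq_comp (adjoint T * T), Ring.mul_inverse_cancel _ hT, one_apply_eq_self,
    reApplyInnerSelf_apply, inner_re_symm]

theorem isPositive_sub_iff_norm_le (hT : IsUnit (adjoint T * T)) :
    (adjoint T * Ring.inverse (adjoint T * T) * T
      - T * Ring.inverse (adjoint T * T) * adjoint T).IsPositive ↔
    ∀ x, ‖T (Ring.inverse (adjoint T * T) (adjoint T x))‖ ≤
      ‖T (Ring.inverse (adjoint T * T) (T x))‖ := by
  set B := Ring.inverse (adjoint T * T)
  have hB : IsSelfAdjoint B := (IsSelfAdjoint.star_mul_self T).ringInverse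
  have hself : IsSelfAdjoint (adjoint T * B * T - T * B * adjoint T) :=
    (hB.conjugate' T).sub (hB.conjugate T)
  have hre : ∀ x, (adjoint T * B * T - T * B * adjoint T).reApplyInnerSelf x =
      ‖T (B (T x))‖ ^ 2 - ‖T (B (adjoint T x))‖ ^ 2 := fun x ↦ by
    have hadj := reApplyInnerSelf_adjoint_mul_mul (adjoint T) B x
    rw [adjoint_adjoint] at hadj
    rw [reApplyInnerSelf_sub, reApplyInnerSelf_adjoint_mul_mul, hadj,
      reApplyInnerSelf_ringInverse_adjoint_mul_self hT,
      reApplyInnerSelf_ringInverse_adjoint_mul_self hT]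
  simp only [isPositive_def', hself, true_and, hre, sub_nonneg]
  exact forall_congr' fun x ↦ pow_le_pow_iff_left₀ (norm_nonneg _) (norm_nonneg _) two_ne_zero

end ContinuousLinearMap

theorem stmt_3 {H : Type*} [NormedAddCommGroup H] [InnerProductSpace ℂ H] [CompleteSpace H]
    (T P : H →L[ℂ] H)
    (hli : ∃ L : H →L[ℂ] H, L * T = 1)
    (hP1 : P * P = P) (hP2 : adjoint P = P)
    (hP3 : LinearMap.range (P : H →ₗ[ℂ] H) = (LinearMap.range (T : H →ₗ[ℂ] H)).topologicalClosure) :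
    List.TFAE
      [ ∀ x, ‖(cauchyDual T * adjoint T) x‖ ≤ ‖(cauchyDual T * T) x‖,
        (adjoint T * Ring.inverse (adjoint T * T) * T
          - T * Ring.inverse (adjoint T * T) * adjoint T).IsPositive,
        (adjoint T * Ring.inverse (adjoint T * T) * T - P).IsPositive ] := by
  obtain ⟨L, hL⟩ := hli
  have hT := isUnit_adjoint_mul_self_of_mul_eq_one hL
  have hPQ := eq_mul_ringInverse_adjoint_mul_self_mul_adjoint hT ⟨hP1, hP2⟩ hP3
  tfae_have 1 ↔ 2 := (isPositive_sub_iff_norm_le hT).symm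
  tfae_have 2 ↔ 3 := by rw [hPQ]
  tfae_finish
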